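/- arXiv:1902.03391 — 6 statements merged into one kernel-verified Lean document; each statement's English description precedes it below -/
import Mathlib

section
/- Let G and H be finite simple graphs with |V(G)| = |V(H)| = n ≥ 2, where H is connected and vertex-transitive, and G has domination number 1 (i.e., G has a vertex adjacent to every other vertex). Then dil(G,H) = d(H), the diameter of H: every bijection f : V(G) → V(H) has some edge uv of G with dist_H(f(u), f(v)) ≥ d(H), and there exists a bijection whose maximum dilation is exactly d(H). -/
/-!
Graph isomorphisms preserve distances, so on a vertex-transitive graph every vertex has
eccentricity equal to the diameter. Given a bijection `f` and a vertex `v₀` adjacent to all others,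
pick `w` at maximal distance from `f v₀`: the edge `v₀ (f⁻¹ w)` is stretched to the full diameter.
Conversely no distance exceeds the diameter, so every bijection has dilation at most `graphDiam H`.
-/

open SimpleGraph

/-- Eccentricity of a vertex: the maximum distance to any other vertex. -/
noncomputable def eccent {W : Type*} [Fintype W] (H : SimpleGraph W) (v : W) : ℕ :=
  Finset.univ.sup fun w => H.dist v w

/-- The diameter of a graph: the maximum eccentricity / max distance between pairs. -/
noncomputable def graphDiam {W : Type*} [Fintype W] (H : SimpleGraph W) : ℕ :=
  Finset.univ.sup fun v => eccent H v

namespace SimpleGraph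

variable {V W : Type*} {G : SimpleGraph V} {H : SimpleGraph W}

theorem Hom.edist_le (f : G →g H) (u v : V) : H.edist (f u) (f v) ≤ G.edist u v := by
  by_cases hr : G.Reachable u v
  · obtain ⟨p, hp⟩ := hr.exists_walk_length_eq_edist
    calc H.edist (f u) (f v) ≤ (p.map f).length := SimpleGraph.edist_le _
      _ = G.edist u v := by rw [Walk.length_map, hp]
  · rw [edist_eq_top_of_not_reachable hr]
    exact le_top

theorem Iso.edist_eq (φ : G ≃g H) (u v : V) : H.edist (φ u) (φ v) = G.edist u v :=
  le_antisymm (Hom.edist_le φ.toHom u v) <| by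
    simpa using Hom.edist_le φ.symm.toHom (φ u) (φ v)

theorem Iso.dist_eq (φ : G ≃g H) (u v : V) : H.dist (φ u) (φ v) = G.dist u v := by
  rw [dist, dist, φ.edist_eq]

end SimpleGraph

section Eccentricity

variable {V W : Type*} [Fintype W]

theorem exists_dist_eq_eccent (H : SimpleGraph W) (v : W) :
    ∃ w, H.dist v w = _root_.eccent H v := by
  obtain ⟨w, -, hw⟩ := Finset.exists_mem_eq_sup Finset.univ ⟨v, Finset.mem_univ v⟩ (H.dist v)
  exact ⟨w, hw.symm⟩

theorem dist_le_eccent (H : SimpleGraph W) (v w : W) : H.dist v w ≤ _root_.eccent H v :=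
  Finset.le_sup (f := H.dist v) (Finset.mem_univ w)

theorem eccent_le_graphDiam (H : SimpleGraph W) (v : W) : _root_.eccent H v ≤ graphDiam H :=
  Finset.le_sup (f := _root_.eccent H) (Finset.mem_univ v)

theorem dist_le_graphDiam (H : SimpleGraph W) (v w : W) : H.dist v w ≤ graphDiam H :=
  (dist_le_eccent H v w).trans (eccent_le_graphDiam H v)

theorem eccent_iso_apply [Fintype V] {G : SimpleGraph V} {H : SimpleGraph W} (φ : G ≃g H) (v : V) :
    _root_.eccent H (φ v) = _root_.eccent G v := by
  rw [_root_.eccent, _root_.eccent, ← Finset.univ_map_equiv_to_embedding φ.toEquiv, Finset.sup_map]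
  exact Finset.sup_congr rfl fun w _ => φ.dist_eq v w

theorem graphDiam_eq_eccent_of_forall_exists_iso {H : SimpleGraph W}
    (htrans : ∀ a b : W, ∃ φ : H ≃g H, φ a = b)
    (v : W) : graphDiam H = _root_.eccent H v :=
  le_antisymm (Finset.sup_le fun w _ => by
    obtain ⟨φ, rfl⟩ := htrans w v
    rw [eccent_iso_apply]) (eccent_le_graphDiam H v)

theorem exists_adj_graphDiam_le_dist [Nontrivial V] {G : SimpleGraph V} {H : SimpleGraph W}
    (htrans : ∀ a b : W, ∃ φ : H ≃g H, φ a = b)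
    {v₀ : V} (hv₀ : ∀ u, u ≠ v₀ → G.Adj v₀ u) (f : V ≃ W) :
    ∃ u v, G.Adj u v ∧ graphDiam H ≤ H.dist (f u) (f v) := by
  obtain ⟨w, hw⟩ := exists_dist_eq_eccent H (f v₀)
  have hdiam : graphDiam H = H.dist (f v₀) w := by
    rw [hw, graphDiam_eq_eccent_of_forall_exists_iso htrans]
  by_cases hfw : f.symm w = v₀
  · -- then `graphDiam H = 0` and any edge at `v₀` will do
    obtain ⟨u, hu⟩ := exists_ne v₀
    rw [← hfw, Equiv.apply_symm_apply, dist_self] at hdiam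
    exact ⟨v₀, u, hv₀ u hu, hdiam ▸ Nat.zero_le _⟩
  · exact ⟨v₀, f.symm w, hv₀ _ hfw, by rw [hdiam, Equiv.apply_symm_apply]⟩

end Eccentricity

theorem dilation_eq_diam_of_vertex_transitive_general
    {V W : Type*} [Fintype V] [Fintype W]
    (G : SimpleGraph V) (H : SimpleGraph W) (n : ℕ)
    (hGcard : Fintype.card V = n) (hHcard : Fintype.card W = n) (hn : 2 ≤ n)
    (htrans : ∀ a b : W, ∃ φ : H ≃g H, φ a = b)
    (hdom : ∃ v : V, ∀ u : V, u ≠ v → G.Adj v u) :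
    (∀ f : V ≃ W, ∃ u v : V, G.Adj u v ∧ graphDiam H ≤ H.dist (f u) (f v)) ∧
    (∃ f : V ≃ W, ∀ u v : V, G.Adj u v → H.dist (f u) (f v) ≤ graphDiam H) := by
  have : Nontrivial V := Fintype.one_lt_card_iff_nontrivial.mp (by omega)
  obtain ⟨v₀, hv₀⟩ := hdom
  exact ⟨exists_adj_graphDiam_le_dist htrans hv₀,
    Fintype.equivOfCardEq (hGcard.trans hHcard.symm), fun u v _ => dist_le_graphDiam H _ _⟩

theorem dilation_eq_diam_of_vertex_transitive
    {V W : Type*} [Fintype V] [Fintype W]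
    (G : SimpleGraph V) (H : SimpleGraph W) (n : ℕ)
    (hGcard : Fintype.card V = n) (hHcard : Fintype.card W = n) (hn : 2 ≤ n)
    (hH : H.Connected)
    (htrans : ∀ a b : W, ∃ φ : H ≃g H, φ a = b)
    (hdom : ∃ v : V, ∀ u : V, u ≠ v → G.Adj v u) :
    (∀ f : V ≃ W, ∃ u v : V, G.Adj u v ∧ graphDiam H ≤ H.dist (f u) (f v)) ∧
    (∃ f : V ≃ W, ∀ u v : V, G.Adj u v → H.dist (f u) (f v) ≤ graphDiam H) :=
  dilation_eq_diam_of_vertex_transitive_general G H n hGcard hHcard hn htrans hdom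
end

section
/- Let l ≥ 3 and n = 2^l − 1. Then dil(W_n, HT(l)) = l − 1: every bijection from the vertices of the wheel W_n to the vertices of the hypertree HT(l) has some edge of W_n whose endpoint images are at distance at least l − 1 in HT(l), and there exists a bijection under which every edge of W_n maps to a pair of vertices at distance at most l − 1 in HT(l). -/
open SimpleGraph

/-- Wheel graph on `Fin n`: hub `0`, rim cycle `1, …, n-1`. -/
def wheelGraph (n : ℕ) : SimpleGraph (Fin n) where
  Adj x y := x ≠ y ∧ (x.val = 0 ∨ y.val = 0 ∨ y.val = x.val + 1 ∨ x.val = y.val + 1 ∨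
    (x.val = 1 ∧ y.val = n - 1) ∨ (y.val = 1 ∧ x.val = n - 1))
  symm := ⟨by rintro x y ⟨h1, h2⟩; exact ⟨h1.symm, by tauto⟩⟩
  loopless := ⟨by rintro x ⟨h1, -⟩; exact h1 rfl⟩

/-- Adjacency of hypertree labels (1-based): binary tree edges plus horizontal
edges between labels on the same level `i ≥ 2` differing by `2^(i-2)`.
The level of label `a` is `Nat.log 2 a + 1`. -/
def htAdjLbl (a b : ℕ) : Prop :=
  (b = 2 * a ∨ b = 2 * a + 1 ∨ a = 2 * b ∨ a = 2 * b + 1) ∨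
  (a ≠ b ∧ Nat.log 2 a = Nat.log 2 b ∧ 1 ≤ Nat.log 2 a ∧
    max a b - min a b = 2 ^ (Nat.log 2 a - 1))

/-- The hypertree `HT(l)` on `Fin (2^l - 1)`; vertex `x` has label `x+1`. -/
def hypertree (l : ℕ) : SimpleGraph (Fin (2 ^ l - 1)) where
  Adj x y := htAdjLbl (x.val + 1) (y.val + 1)
  symm := by
    constructor
    rintro x y (h | ⟨hne, hlog, hge, hdiff⟩)
    · left; tauto
    · right
      refine ⟨hne.symm, hlog.symm, ?_, ?_⟩
      · rw [← hlog]; exact hge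
      · rw [max_comm, min_comm, ← hlog]; exact hdiff
  loopless := by
    constructor
    rintro x (h | ⟨hne, -⟩)
    · omega
    · exact hne rfl

/-!
Lower bound. The hub is adjacent to every other vertex, so it suffices that every vertex `v` of
`HT(l)` has a vertex at distance at least `l - 1`. Let `c₀ c₁` be the complements of the two binary
digits of `v` just below its leading one. The `potential` below is 1-Lipschitz on `HT(l)`: tree
edges change the depth by one and keep these digits, horizontal edges keep the depth and the second
digit. It is at most `2` at `v` and equals `l + 1` at the leaf `(4 + 2 c₀ + c₁) 2 ^ (l - 3)`.

Upper bound. Send the hub to the root and run the rim through the left subtree of the root in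
in-order, then back through the right subtree in reverse in-order. Consecutive vertices in in-order
are a leaf and one of its ancestors, hence at distance at most `l - 1`, and the two rim edges
crossing between the subtrees join leaves `x` and `x + 2 ^ (l - 2)`, which are horizontal
neighbours.
-/

namespace SimpleGraph

variable {V : Type*} {G : SimpleGraph V} {f : V → ℤ}

theorem Walk.abs_sub_le_length (hf : ∀ ⦃u v⦄, G.Adj u v → |f u - f v| ≤ 1) {u v : V}
    (p : G.Walk u v) : |f u - f v| ≤ p.length := by
  induction p with
  | nil => simp
  | @cons u v w huv p ih =>
    calc |f u - f w| ≤ |f u - f v| + |f v - f w| := abs_sub_le _ _ _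
      _ ≤ 1 + p.length := add_le_add (hf huv) ih
      _ = (p.cons huv).length := by simp [add_comm]

theorem Reachable.abs_sub_le_dist (hf : ∀ ⦃u v⦄, G.Adj u v → |f u - f v| ≤ 1) {u v : V}
    (h : G.Reachable u v) : |f u - f v| ≤ G.dist u v := by
  obtain ⟨p, hp⟩ := h.exists_walk_length_eq_dist
  exact hp ▸ p.abs_sub_le_length hf

end SimpleGraph

theorem Nat.div_two_pow_log_two {a : ℕ} (ha : a ≠ 0) : a / 2 ^ Nat.log 2 a = 1 := by
  have h₁ := Nat.pow_log_le_self 2 ha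
  have h₂ := Nat.lt_pow_succ_log_self one_lt_two a
  rw [pow_succ] at h₂
  exact Nat.div_eq_of_lt_le (by omega) (by omega)

theorem Nat.log_two_two_mul_add {a e : ℕ} (ha : a ≠ 0) (he : e ≤ 1) :
    Nat.log 2 (2 * a + e) = Nat.log 2 a + 1 := by
  have h := Nat.log_div_base 2 (2 * a + e)
  have hpos : 1 ≤ Nat.log 2 (2 * a + e) := Nat.le_log_of_pow_le one_lt_two (by omega)
  rw [show (2 * a + e) / 2 = a by omega] at h
  omega

theorem Nat.add_two_pow_succ_div_two_pow_mod_two (a i : ℕ) :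
    (a + 2 ^ (i + 1)) / 2 ^ i % 2 = a / 2 ^ i % 2 := by
  rw [pow_succ, Nat.add_mul_div_left _ _ (by positivity)]
  omega

theorem hypertree_adj_of_div_two {l : ℕ} {x y : Fin (2 ^ l - 1)} (h : (x.val + 1) / 2 = y.val + 1) :
    (hypertree l).Adj x y :=
  Or.inl (by omega)

theorem hypertree_exists_walk_of_div_pow {l : ℕ} :
    ∀ (t : ℕ) {x y : Fin (2 ^ l - 1)}, (x.val + 1) / 2 ^ t = y.val + 1 →
      ∃ p : (hypertree l).Walk x y, p.length ≤ t
  | 0, x, y, h => by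
    obtain rfl : x = y := Fin.ext (by simpa using h)
    exact ⟨.nil, le_rfl⟩
  | t + 1, x, y, h => by
    rw [pow_succ', ← Nat.div_div_eq_div_mul] at h
    have hpos : 1 ≤ (x.val + 1) / 2 := by
      by_contra! h0
      simp [Nat.lt_one_iff.mp h0] at h
    let z : Fin (2 ^ l - 1) := ⟨(x.val + 1) / 2 - 1, by omega⟩
    obtain ⟨p, hp⟩ := hypertree_exists_walk_of_div_pow t (x := z) (y := y)
      (by rwa [show z.val + 1 = (x.val + 1) / 2 from Nat.sub_add_cancel hpos])
    exact ⟨.cons (hypertree_adj_of_div_two (Nat.sub_add_cancel hpos).symm) p, by simpa using hp⟩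

theorem hypertree_dist_le_of_div_pow {l t : ℕ} {x y : Fin (2 ^ l - 1)}
    (h : (x.val + 1) / 2 ^ t = y.val + 1) : (hypertree l).dist x y ≤ t := by
  obtain ⟨p, hp⟩ := hypertree_exists_walk_of_div_pow t h
  exact (dist_le p).trans hp

theorem hypertree_exists_walk_root {l : ℕ} (x : Fin (2 ^ l - 1)) :
    ∃ p : (hypertree l).Walk x ⟨0, x.pos⟩, p.length ≤ l - 1 := by
  obtain ⟨p, hp⟩ := hypertree_exists_walk_of_div_pow (Nat.log 2 (x.val + 1)) (x := x)
    (y := ⟨0, x.pos⟩) (Nat.div_two_pow_log_two (by omega))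
  refine ⟨p, hp.trans ?_⟩
  have := Nat.log_lt_of_lt_pow (b := 2) (by omega : x.val + 1 ≠ 0) (by omega : x.val + 1 < 2 ^ l)
  omega

theorem hypertree_preconnected (l : ℕ) : (hypertree l).Preconnected := fun x y => by
  obtain ⟨p, -⟩ := hypertree_exists_walk_root x
  obtain ⟨q, -⟩ := hypertree_exists_walk_root y
  exact ⟨p.append q.reverse⟩

theorem hypertree_dist_root_le {l : ℕ} (x y : Fin (2 ^ l - 1)) (hx : x.val = 0) :
    (hypertree l).dist x y ≤ l - 1 := by
  obtain ⟨p, hp⟩ := hypertree_exists_walk_root y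
  rw [dist_comm, show x = ⟨0, y.pos⟩ from Fin.ext hx]
  exact (dist_le p).trans hp

/-- For a label of depth `k` whose two binary digits below the leading one are `s₀ s₁`: roughly
`k + 2` below the depth-2 vertex with digits `c₀ c₁`, `k + 1` below its horizontal twin, and
decreasing in `k` elsewhere. -/
def potential (c₀ c₁ k s₀ s₁ : ℕ) : ℤ :=
  (if k = 0 ∨ s₀ = c₀ then 1 else 0) + (if k ≤ 1 ∨ s₁ = c₁ then (k : ℤ) + 1 else 3 - k)

theorem abs_potential_succ_sub_le {c₀ c₁ k s₀ s₁ s₀' s₁' : ℕ} (h₀ : 1 ≤ k → s₀' = s₀)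
    (h₁ : 2 ≤ k → s₁' = s₁) : |potential c₀ c₁ (k + 1) s₀' s₁' - potential c₀ c₁ k s₀ s₁| ≤ 1 := by
  unfold potential
  rw [abs_le]
  split_ifs <;> simp only [false_or] at * <;> omega

theorem abs_potential_sub_le {c₀ c₁ k s₀ s₁ s₀' s₁' : ℕ} (h₁ : 2 ≤ k → s₁' = s₁) :
    |potential c₀ c₁ k s₀' s₁' - potential c₀ c₁ k s₀ s₁| ≤ 1 := by
  unfold potential
  rw [abs_le]
  split_ifs <;> omega

theorem potential_le_two {c₀ c₁ k s₀ s₁ : ℕ} (h₀ : s₀ ≠ c₀) (h₁ : s₁ ≠ c₁) :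
    potential c₀ c₁ k s₀ s₁ ≤ 2 := by
  unfold potential
  split_ifs <;> omega

theorem potential_self (c₀ c₁ k : ℕ) : potential c₀ c₁ k c₀ c₁ = k + 2 := by
  simp only [potential, or_true, if_true]
  ring

def bitBelowTop (j a : ℕ) : ℕ := a / 2 ^ (Nat.log 2 a - j) % 2

theorem bitBelowTop_two_mul_add {j a e : ℕ} (ha : a ≠ 0) (he : e ≤ 1) (hj : j ≤ Nat.log 2 a) :
    bitBelowTop j (2 * a + e) = bitBelowTop j a := by
  rw [bitBelowTop, bitBelowTop, Nat.log_two_two_mul_add ha he,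
    show Nat.log 2 a + 1 - j = Nat.log 2 a - j + 1 by omega, pow_succ', ← Nat.div_div_eq_div_mul,
    show (2 * a + e) / 2 = a by omega]

def labelPotential (c₀ c₁ a : ℕ) : ℤ :=
  potential c₀ c₁ (Nat.log 2 a) (bitBelowTop 1 a) (bitBelowTop 2 a)

theorem abs_labelPotential_two_mul_add_sub_le (c₀ c₁ : ℕ) {a e : ℕ} (ha : a ≠ 0) (he : e ≤ 1) :
    |labelPotential c₀ c₁ (2 * a + e) - labelPotential c₀ c₁ a| ≤ 1 := by
  rw [labelPotential, labelPotential, Nat.log_two_two_mul_add ha he]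
  exact abs_potential_succ_sub_le (bitBelowTop_two_mul_add ha he) (bitBelowTop_two_mul_add ha he)

theorem abs_labelPotential_sub_le_of_horizontal (c₀ c₁ : ℕ) {a b : ℕ}
    (hlog : Nat.log 2 b = Nat.log 2 a) (hab : b = a + 2 ^ (Nat.log 2 a - 1)) :
    |labelPotential c₀ c₁ b - labelPotential c₀ c₁ a| ≤ 1 := by
  rw [labelPotential, labelPotential, hlog]
  refine abs_potential_sub_le fun hk => ?_
  rw [bitBelowTop, bitBelowTop, hlog, hab, show Nat.log 2 a - 1 = Nat.log 2 a - 2 + 1 by omega,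
    Nat.add_two_pow_succ_div_two_pow_mod_two]

theorem abs_labelPotential_sub_le_of_htAdjLbl (c₀ c₁ : ℕ) {a b : ℕ} (ha : a ≠ 0) (hb : b ≠ 0)
    (h : htAdjLbl a b) : |labelPotential c₀ c₁ a - labelPotential c₀ c₁ b| ≤ 1 := by
  rcases h with (rfl | rfl | rfl | rfl) | ⟨-, hlog, -, hd⟩
  · rw [abs_sub_comm]; simpa using abs_labelPotential_two_mul_add_sub_le c₀ c₁ ha zero_le_one
  · rw [abs_sub_comm]; exact abs_labelPotential_two_mul_add_sub_le c₀ c₁ ha le_rfl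
  · simpa using abs_labelPotential_two_mul_add_sub_le c₀ c₁ hb zero_le_one
  · exact abs_labelPotential_two_mul_add_sub_le c₀ c₁ hb le_rfl
  · rcases le_total a b with hab | hab
    · rw [abs_sub_comm]
      exact abs_labelPotential_sub_le_of_horizontal c₀ c₁ hlog.symm (by omega)
    · exact abs_labelPotential_sub_le_of_horizontal c₀ c₁ hlog (by rw [← hlog]; omega)

theorem abs_labelPotential_sub_le_hypertree_dist (c₀ c₁ : ℕ) {l : ℕ} (x y : Fin (2 ^ l - 1)) :
    |labelPotential c₀ c₁ (x.val + 1) - labelPotential c₀ c₁ (y.val + 1)| ≤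
      (hypertree l).dist x y := by
  have hf : ∀ ⦃u v : Fin (2 ^ l - 1)⦄, (hypertree l).Adj u v →
      |labelPotential c₀ c₁ (u.val + 1) - labelPotential c₀ c₁ (v.val + 1)| ≤ 1 := fun u v h =>
    abs_labelPotential_sub_le_of_htAdjLbl c₀ c₁ u.val.succ_ne_zero v.val.succ_ne_zero h
  exact (hypertree_preconnected l x y).abs_sub_le_dist hf

theorem labelPotential_mul_two_pow {c₀ c₁ : ℕ} (hc₀ : c₀ ≤ 1) (hc₁ : c₁ ≤ 1) (m : ℕ) :
    labelPotential c₀ c₁ ((4 + 2 * c₀ + c₁) * 2 ^ m) = m + 4 := by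
  have hlog : Nat.log 2 ((4 + 2 * c₀ + c₁) * 2 ^ m) = m + 2 := by
    refine Nat.log_eq_of_pow_le_of_lt_pow ?_ ?_
    · rw [pow_add, mul_comm]; gcongr; omega
    · rw [show m + 2 + 1 = m + 3 from rfl, pow_add, mul_comm (2 ^ m)]; gcongr; omega
  have h₀ : bitBelowTop 1 ((4 + 2 * c₀ + c₁) * 2 ^ m) = c₀ := by
    rw [bitBelowTop, hlog, show m + 2 - 1 = m + 1 by omega, pow_succ',
      Nat.mul_div_mul_right _ _ (by positivity)]
    omega
  have h₁ : bitBelowTop 2 ((4 + 2 * c₀ + c₁) * 2 ^ m) = c₁ := by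
    rw [bitBelowTop, hlog, Nat.add_sub_cancel, Nat.mul_div_cancel _ (by positivity)]
    omega
  rw [labelPotential, hlog, h₀, h₁, potential_self]
  push_cast
  ring

theorem exists_le_hypertree_dist {l : ℕ} (hl : 3 ≤ l) (v : Fin (2 ^ l - 1)) :
    ∃ w, l - 1 ≤ (hypertree l).dist v w := by
  obtain ⟨m, rfl⟩ := Nat.exists_eq_add_of_le' hl
  set c₀ := 1 - bitBelowTop 1 (v.val + 1)
  set c₁ := 1 - bitBelowTop 2 (v.val + 1)
  have hs₀ : bitBelowTop 1 (v.val + 1) ≤ 1 := Nat.le_of_lt_succ (Nat.mod_lt _ two_pos)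
  have hs₁ : bitBelowTop 2 (v.val + 1) ≤ 1 := Nat.le_of_lt_succ (Nat.mod_lt _ two_pos)
  have hw_lt : (4 + 2 * c₀ + c₁) * 2 ^ m - 1 < 2 ^ (m + 3) - 1 := by
    have : (4 + 2 * c₀ + c₁) * 2 ^ m < 8 * 2 ^ m := by gcongr; omega
    rw [pow_add]
    omega
  let w : Fin (2 ^ (m + 3) - 1) := ⟨_, hw_lt⟩
  have hv : labelPotential c₀ c₁ (v.val + 1) ≤ 2 := potential_le_two (by omega) (by omega)
  have hw : labelPotential c₀ c₁ (w.val + 1) = m + 4 := by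
    rw [Nat.sub_add_cancel (Nat.succ_le_of_lt (by positivity))]
    exact labelPotential_mul_two_pow (by omega : c₀ ≤ 1) (by omega : c₁ ≤ 1) m
  have hdist := abs_labelPotential_sub_le_hypertree_dist c₀ c₁ v w
  rw [abs_le] at hdist
  exact ⟨w, by omega⟩

/-- The `ρ`-th vertex, counting from `1`, of the complete binary tree on labels `1, …, 2 ^ l - 1`
in in-order: if `2 ^ l + ρ = 2 ^ i * c` with `c` odd, it is `c / 2`, a vertex of height `i`. -/
def inorderLabel (l ρ : ℕ) : ℕ := ordCompl[2] (2 ^ l + ρ) / 2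

theorem inorderLabel_spec {l ρ : ℕ} (h₁ : 1 ≤ ρ) (h₂ : ρ < 2 ^ l) :
    ∃ i c, 2 ^ i * c = 2 ^ l + ρ ∧ c % 2 = 1 ∧ 3 ≤ c ∧ i < l ∧ inorderLabel l ρ = c / 2 := by
  obtain ⟨i, c, hic, hc, hlabel⟩ :
      ∃ i c, 2 ^ i * c = 2 ^ l + ρ ∧ c % 2 = 1 ∧ inorderLabel l ρ = c / 2 :=
    ⟨_, _, Nat.ordProj_mul_ordCompl_eq_self _ 2,
      Nat.two_dvd_ne_zero.mp (Nat.not_dvd_ordCompl Nat.prime_two (by positivity)), rfl⟩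
  have hl : 2 ^ (l + 1) = 2 * 2 ^ l := pow_succ' 2 l
  have hc₃ : 3 ≤ c := by
    by_contra! hc₃
    obtain rfl : c = 1 := by omega
    have h₁ : l < i := (Nat.pow_lt_pow_iff_right one_lt_two).mp (by omega)
    have h₂ : i < l + 1 := (Nat.pow_lt_pow_iff_right one_lt_two).mp (by omega)
    omega
  have hi : i < l := by
    have : 2 ^ i * 3 ≤ 2 ^ i * c := Nat.mul_le_mul_left _ hc₃
    exact (Nat.pow_lt_pow_iff_right one_lt_two).mp (by omega)
  exact ⟨i, c, hic, hc, hc₃, hi, hlabel⟩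

theorem one_le_inorderLabel {l ρ : ℕ} (h₁ : 1 ≤ ρ) (h₂ : ρ < 2 ^ l) : 1 ≤ inorderLabel l ρ := by
  obtain ⟨i, c, -, -, hc, -, hlabel⟩ := inorderLabel_spec h₁ h₂
  omega

theorem inorderLabel_lt {l ρ : ℕ} (h₁ : 1 ≤ ρ) (h₂ : ρ < 2 ^ l) : inorderLabel l ρ < 2 ^ l := by
  obtain ⟨i, c, hic, -, -, -, hlabel⟩ := inorderLabel_spec h₁ h₂
  have : c ≤ 2 ^ i * c := Nat.le_mul_of_pos_left c (by positivity)
  omega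

theorem inorderLabel_injOn {l ρ σ : ℕ} (hρ₁ : 1 ≤ ρ) (hρ₂ : ρ < 2 ^ l) (hσ₁ : 1 ≤ σ)
    (hσ₂ : σ < 2 ^ l) (h : inorderLabel l ρ = inorderLabel l σ) : ρ = σ := by
  obtain ⟨i, c, hic, hc, -, -, hρ⟩ := inorderLabel_spec hρ₁ hρ₂
  obtain ⟨j, d, hjd, hd, -, -, hσ⟩ := inorderLabel_spec hσ₁ hσ₂
  obtain rfl : c = d := by omega
  have hl : 2 ^ (l + 1) = 2 * 2 ^ l := pow_succ' 2 l
  -- `2 ^ i * c` and `2 ^ j * c` both lie in `[2 ^ l, 2 ^ (l + 1))`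
  obtain rfl : i = j := by
    by_contra hne
    rcases Nat.lt_or_gt_of_ne hne with h | h
    all_goals
      have := Nat.mul_le_mul_right c (Nat.pow_le_pow_right two_pos h)
      rw [pow_succ] at this
      nlinarith
  omega

theorem div_two_div_two_pow {j d e : ℕ} (hj : 1 ≤ j) (hd : d % 2 = 1)
    (he : e + 1 = 2 ^ j * d ∨ e = 2 ^ j * d + 1) : e / 2 / 2 ^ j = d / 2 := by
  obtain ⟨q, hq⟩ : ∃ q, 2 ^ j = 2 * q := ⟨2 ^ (j - 1), (mul_pow_sub_one (by omega) 2).symm⟩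
  have hq₁ : 1 ≤ q := by have := Nat.one_le_two_pow (n := j); omega
  obtain ⟨s, rfl⟩ : ∃ s, d = 2 * s + 1 := ⟨d / 2, by omega⟩
  rw [hq] at he
  rw [Nat.div_div_eq_div_mul, hq, show (2 * s + 1) / 2 = s by omega]
  refine Nat.div_eq_of_lt_le ?_ ?_ <;> rcases he with he | he <;> nlinarith

theorem inorderLabel_succ {l ρ : ℕ} (h₁ : 1 ≤ ρ) (h₂ : ρ + 1 < 2 ^ l) :
    ∃ i < l, inorderLabel l ρ / 2 ^ i = inorderLabel l (ρ + 1) ∨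
      inorderLabel l (ρ + 1) / 2 ^ i = inorderLabel l ρ := by
  obtain ⟨i, c, hic, hc, -, hi, hρ⟩ := inorderLabel_spec (l := l) h₁ (by omega)
  obtain ⟨j, d, hjd, hd, -, hj, hσ⟩ := inorderLabel_spec (by omega) h₂
  have even_of_pos : ∀ {k b : ℕ}, 0 < k → 2 ∣ 2 ^ k * b := fun hk =>
    Dvd.dvd.mul_right (dvd_pow_self 2 hk.ne') _
  rcases Nat.eq_zero_or_pos i with rfl | hi₀ <;> rcases Nat.eq_zero_or_pos j with rfl | hj₀
  · omega
  · refine ⟨j, hj, Or.inl ?_⟩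
    rw [hρ, hσ]
    exact div_two_div_two_pow hj₀ hd (Or.inl (by omega))
  · refine ⟨i, hi, Or.inr ?_⟩
    rw [hρ, hσ]
    exact div_two_div_two_pow hi₀ hc (Or.inr (by omega))
  · have := even_of_pos hi₀ (b := c)
    have := even_of_pos hj₀ (b := d)
    omega

theorem inorderLabel_of_odd {l ρ : ℕ} (hl : l ≠ 0) (hρ : ρ % 2 = 1) :
    inorderLabel l ρ = 2 ^ (l - 1) + ρ / 2 := by
  have := mul_pow_sub_one hl 2
  rw [inorderLabel,
    (Nat.ordCompl_eq_self_iff_zero_or_not_dvd _ Nat.prime_two).mpr (Or.inr (by omega))]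
  omega

theorem inorderLabel_two_pow {l : ℕ} (hl : l ≠ 0) : inorderLabel l (2 ^ (l - 1)) = 1 := by
  rw [inorderLabel, ← mul_pow_sub_one hl 2,
    show 2 * 2 ^ (l - 1) + 2 ^ (l - 1) = 2 ^ (l - 1) * 3 by ring,
    Nat.ordCompl_pow_mul_of_not_dvd _ Nat.prime_two (by norm_num)]

theorem htAdjLbl_two_pow_add {m t : ℕ} (ht : t < 2 ^ m) :
    htAdjLbl (2 ^ (m + 1) + t) (2 ^ (m + 1) + t + 2 ^ m) := by
  have h₁ : 2 ^ (m + 1) = 2 * 2 ^ m := pow_succ' 2 m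
  have h₂ : 2 ^ (m + 1 + 1) = 4 * 2 ^ m := by rw [pow_succ', h₁]; ring
  have hlog₁ : Nat.log 2 (2 ^ (m + 1) + t) = m + 1 :=
    Nat.log_eq_of_pow_le_of_lt_pow (by omega) (by omega)
  have hlog₂ : Nat.log 2 (2 ^ (m + 1) + t + 2 ^ m) = m + 1 :=
    Nat.log_eq_of_pow_le_of_lt_pow (by omega) (by omega)
  refine Or.inr ⟨by omega, by rw [hlog₁, hlog₂], by omega, ?_⟩
  rw [hlog₁, max_eq_right (by omega), min_eq_left (by omega), Nat.add_sub_cancel]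
  omega

theorem hypertree_dist_le_of_inorder_succ {l ρ : ℕ} {x y : Fin (2 ^ l - 1)} (h₁ : 1 ≤ ρ)
    (h₂ : ρ + 1 < 2 ^ l) (hx : x.val + 1 = inorderLabel l ρ)
    (hy : y.val + 1 = inorderLabel l (ρ + 1)) : (hypertree l).dist x y ≤ l - 1 := by
  obtain ⟨i, hi, h | h⟩ := inorderLabel_succ h₁ h₂
  · exact (hypertree_dist_le_of_div_pow (t := i) (by rw [hx, hy, h])).trans (by omega)
  · rw [dist_comm]
    exact (hypertree_dist_le_of_div_pow (t := i) (by rw [hx, hy, h])).trans (by omega)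

theorem hypertree_adj_of_inorder_add_two_pow {l ρ : ℕ} {x y : Fin (2 ^ l - 1)} (hl : 2 ≤ l)
    (hρ : ρ % 2 = 1) (hρ' : ρ < 2 ^ (l - 1)) (hx : x.val + 1 = inorderLabel l ρ)
    (hy : y.val + 1 = inorderLabel l (ρ + 2 ^ (l - 1))) : (hypertree l).Adj x y := by
  obtain ⟨m, rfl⟩ := Nat.exists_eq_add_of_le' hl
  have h₁ : 2 ^ (m + 1) = 2 * 2 ^ m := pow_succ' 2 m
  rw [show m + 2 - 1 = m + 1 from rfl] at hρ' hy
  rw [inorderLabel_of_odd (by omega) hρ, show m + 2 - 1 = m + 1 from rfl] at hx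
  rw [inorderLabel_of_odd (by omega) (by omega), show m + 2 - 1 = m + 1 from rfl] at hy
  show htAdjLbl (x.val + 1) (y.val + 1)
  rw [hx, hy, show (ρ + 2 ^ (m + 1)) / 2 = ρ / 2 + 2 ^ m by omega, ← add_assoc]
  exact htAdjLbl_two_pow_add (by omega)

/-- In-order rank of the hypertree vertex placed at wheel position `p`: the hub goes to the root,
and the rim runs through the left half of the tree in order, then back through the right half. -/
def wheelRank (l p : ℕ) : ℕ :=
  if p = 0 then 2 ^ (l - 1) else if p < 2 ^ (l - 1) then p else 3 * 2 ^ (l - 1) - 1 - p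

theorem wheelRank_mem {l p : ℕ} (hp : p < 2 ^ l - 1) :
    1 ≤ wheelRank l p ∧ wheelRank l p < 2 ^ l := by
  have := mul_pow_sub_one (show l ≠ 0 by rintro rfl; simp at hp) 2
  unfold wheelRank
  split_ifs <;> omega

theorem wheelRank_injOn {l p q : ℕ} (hp : p < 2 ^ l - 1) (hq : q < 2 ^ l - 1)
    (h : wheelRank l p = wheelRank l q) : p = q := by
  have := mul_pow_sub_one (show l ≠ 0 by rintro rfl; simp at hp) 2
  unfold wheelRank at h
  split_ifs at h <;> omega

theorem wheelRank_succ {l p : ℕ} (hp : 1 ≤ p) (hp' : p + 1 < 2 ^ l - 1) :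
    wheelRank l (p + 1) = wheelRank l p + 1 ∨ wheelRank l p = wheelRank l (p + 1) + 1 ∨
      wheelRank l p = 2 ^ (l - 1) - 1 ∧ wheelRank l (p + 1) = 2 ^ (l - 1) - 1 + 2 ^ (l - 1) := by
  have := mul_pow_sub_one (show l ≠ 0 by rintro rfl; simp at hp') 2
  rw [wheelRank, wheelRank, if_neg p.succ_ne_zero, if_neg (show p ≠ 0 by omega)]
  split_ifs <;> omega

def wheelToHypertree (l : ℕ) (p : Fin (2 ^ l - 1)) : Fin (2 ^ l - 1) :=
  ⟨inorderLabel l (wheelRank l p) - 1, by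
    have ⟨h₁, h₂⟩ := wheelRank_mem p.isLt
    have := inorderLabel_lt h₁ h₂
    omega⟩

theorem wheelToHypertree_label {l : ℕ} (p : Fin (2 ^ l - 1)) :
    (wheelToHypertree l p).val + 1 = inorderLabel l (wheelRank l p) := by
  have ⟨h₁, h₂⟩ := wheelRank_mem p.isLt
  exact Nat.sub_add_cancel (one_le_inorderLabel h₁ h₂)

theorem wheelToHypertree_injective (l : ℕ) : Function.Injective (wheelToHypertree l) := by
  intro p q h
  have hpq := wheelToHypertree_label p
  rw [h, wheelToHypertree_label] at hpq
  have ⟨hp₁, hp₂⟩ := wheelRank_mem p.isLt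
  have ⟨hq₁, hq₂⟩ := wheelRank_mem q.isLt
  exact Fin.ext (wheelRank_injOn q.isLt p.isLt (inorderLabel_injOn hq₁ hq₂ hp₁ hp₂ hpq)).symm

theorem wheelToHypertree_hub {l : ℕ} {p : Fin (2 ^ l - 1)} (hp : p.val = 0) :
    (wheelToHypertree l p).val = 0 := by
  have h := wheelToHypertree_label p
  have hl : l ≠ 0 := by rintro rfl; exact absurd p.isLt (by simp)
  rw [wheelRank, if_pos hp, inorderLabel_two_pow hl] at h
  omega

theorem hypertree_dist_wheelToHypertree_succ_le {l : ℕ} (hl : 3 ≤ l) {p q : Fin (2 ^ l - 1)}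
    (hp : 1 ≤ p.val) (hq : q.val = p.val + 1) :
    (hypertree l).dist (wheelToHypertree l p) (wheelToHypertree l q) ≤ l - 1 := by
  have hx := wheelToHypertree_label p
  have hy := wheelToHypertree_label q
  have ⟨hp₁, hp₂⟩ := wheelRank_mem p.isLt
  have ⟨hq₁, hq₂⟩ := wheelRank_mem q.isLt
  have hH := mul_pow_sub_one (show l - 1 ≠ 0 by omega) 2
  rw [hq] at hy hq₁ hq₂
  rcases wheelRank_succ hp (hq ▸ q.isLt) with h | h | ⟨h₁, h₂⟩
  · rw [h] at hy
    exact hypertree_dist_le_of_inorder_succ hp₁ (by omega) hx hy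
  · rw [h] at hx
    rw [dist_comm]
    exact hypertree_dist_le_of_inorder_succ hq₁ (by omega) hy hx
  · rw [h₁] at hx
    rw [h₂] at hy
    have := hypertree_adj_of_inorder_add_two_pow (by omega) (by omega) (by omega) hx hy
    exact (dist_eq_one_iff_adj.mpr this).le.trans (by omega)

theorem hypertree_dist_wheelToHypertree_wrap_le {l : ℕ} (hl : 3 ≤ l) {p q : Fin (2 ^ l - 1)}
    (hp : p.val = 1) (hq : q.val = 2 ^ l - 1 - 1) :
    (hypertree l).dist (wheelToHypertree l p) (wheelToHypertree l q) ≤ l - 1 := by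
  have hx := wheelToHypertree_label p
  have hy := wheelToHypertree_label q
  have := mul_pow_sub_one (show l ≠ 0 by omega) 2
  have := mul_pow_sub_one (show l - 1 ≠ 0 by omega) 2
  rw [wheelRank, hp, if_neg one_ne_zero, if_pos (by omega)] at hx
  rw [wheelRank, hq, if_neg (by omega), if_neg (by omega),
    show 3 * 2 ^ (l - 1) - 1 - (2 ^ l - 1 - 1) = 1 + 2 ^ (l - 1) by omega] at hy
  have := hypertree_adj_of_inorder_add_two_pow (by omega) (by omega) (by omega) hx hy
  exact (dist_eq_one_iff_adj.mpr this).le.trans (by omega)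

theorem hypertree_dist_wheelToHypertree_le {l : ℕ} (hl : 3 ≤ l) {p q : Fin (2 ^ l - 1)}
    (h : (wheelGraph (2 ^ l - 1)).Adj p q) :
    (hypertree l).dist (wheelToHypertree l p) (wheelToHypertree l q) ≤ l - 1 := by
  obtain ⟨-, hp | hq | hpq | hqp | ⟨hp, hq⟩ | ⟨hq, hp⟩⟩ := h
  · exact hypertree_dist_root_le _ _ (wheelToHypertree_hub hp)
  · rw [dist_comm]
    exact hypertree_dist_root_le _ _ (wheelToHypertree_hub hq)
  · rcases Nat.eq_zero_or_pos p.val with hp | hp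
    · exact hypertree_dist_root_le _ _ (wheelToHypertree_hub hp)
    · exact hypertree_dist_wheelToHypertree_succ_le hl hp hpq
  · rcases Nat.eq_zero_or_pos q.val with hq | hq
    · rw [dist_comm]
      exact hypertree_dist_root_le _ _ (wheelToHypertree_hub hq)
    · rw [dist_comm]
      exact hypertree_dist_wheelToHypertree_succ_le hl hq hqp
  · exact hypertree_dist_wheelToHypertree_wrap_le hl hp hq
  · rw [dist_comm]
    exact hypertree_dist_wheelToHypertree_wrap_le hl hq hp

theorem dil_wheel_hypertree (l n : ℕ) (hl : 3 ≤ l) (hn : n = 2 ^ l - 1) :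
    (∀ f : Fin n ≃ Fin (2 ^ l - 1), ∃ u v : Fin n, (wheelGraph n).Adj u v ∧
      l - 1 ≤ (hypertree l).dist (f u) (f v)) ∧
    (∃ f : Fin n ≃ Fin (2 ^ l - 1), ∀ u v : Fin n, (wheelGraph n).Adj u v →
      (hypertree l).dist (f u) (f v) ≤ l - 1) := by
  subst hn
  have hpos : 0 < 2 ^ l - 1 := by have := Nat.pow_le_pow_right two_pos hl; omega
  refine ⟨fun f => ?_, ⟨Equiv.ofBijective _ (wheelToHypertree_injective l).bijective_of_finite,
    fun u v h => hypertree_dist_wheelToHypertree_le hl h⟩⟩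
  let hub : Fin (2 ^ l - 1) := ⟨0, hpos⟩
  obtain ⟨w, hw⟩ := exists_le_hypertree_dist hl (f hub)
  refine ⟨hub, f.symm w, ⟨fun h => ?_, Or.inl rfl⟩, by simpa using hw⟩
  rw [h, Equiv.apply_symm_apply, dist_self] at hw
  omega
end

section
/- Let n ≥ 4. Every embedding with routing of the windmill graph WM_{2^{n−1}} (on 2^n vertices) into the circulant graph G(2^n; ±{1, 2^{n−2}}) has some edge of the circulant graph whose congestion is at least 2^{n−2}. -/
open SimpleGraph

/-- Windmill graph `WM_k` on `Fin (2k)`: the friendship graph `T_k` with one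
degree-two vertex deleted; hub `0`, triangles `(0,1,2), …, (0,2k-3,2k-2)` and
pendant vertex `2k-1`. -/
def windmillGraph (k : ℕ) : SimpleGraph (Fin (2 * k)) where
  Adj x y := x ≠ y ∧ (x.val = 0 ∨ y.val = 0 ∨
    (y.val = x.val + 1 ∧ x.val % 2 = 1) ∨ (x.val = y.val + 1 ∧ y.val % 2 = 1))
  symm := ⟨by rintro x y ⟨h1, h2⟩; exact ⟨h1.symm, by tauto⟩⟩
  loopless := ⟨by rintro x ⟨h1, -⟩; exact h1 rfl⟩

/-- The circulant graph `G(m; ±S)` on `ZMod m`: `i` and `j` are adjacent iff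
`(i - j) mod m ∈ S` or `(j - i) mod m ∈ S`. -/
def circulantG (m : ℕ) (S : Set ℕ) : SimpleGraph (ZMod m) where
  Adj i j := i ≠ j ∧ ((i - j).val ∈ S ∨ (j - i).val ∈ S)
  symm := ⟨by rintro i j ⟨h1, h2⟩; exact ⟨h1.symm, h2.symm⟩⟩
  loopless := ⟨by rintro i ⟨h1, -⟩; exact h1 rfl⟩

/-- An embedding with routing: a bijection on vertices together with, for each edge
of the guest graph, a path in the host graph between the images of its endpoints
(routing an edge in either direction uses the same path, reversed). -/
structure RoutedEmbedding {V W : Type*} (G : SimpleGraph V) (H : SimpleGraph W) where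
  toEquiv : V ≃ W
  route : ∀ u v, G.Adj u v → H.Walk (toEquiv u) (toEquiv v)
  route_isPath : ∀ u v (h : G.Adj u v), (route u v h).IsPath
  route_symm : ∀ u v (h : G.Adj u v), route v u h.symm = (route u v h).reverse

/-- The congestion of an edge `e` of the host graph: the number of guest edges whose
routing path passes through `e`. -/
noncomputable def congestion {V W : Type*} (G : SimpleGraph V) (H : SimpleGraph W)
    (R : RoutedEmbedding G H) (e : Sym2 W) : ℕ :=
  {d : Sym2 V | d ∈ G.edgeSet ∧
    ∃ u v, ∃ h : G.Adj u v, d = s(u, v) ∧ e ∈ (R.route u v h).edges}.ncard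

/-!
The hub of the windmill is adjacent to all other `2^n - 1` vertices, while every vertex of
`G(2^n; ±{1, 2^(n-2)})` has degree at most `4`. Every route from the hub leaves its image along
one of these at most four host edges, so by pigeonhole one of them carries at least
`⌈(2^n - 1) / 4⌉ = 2^(n-2)` routes.
-/

variable {V W : Type*} {G : SimpleGraph V} {H : SimpleGraph W}

lemma RoutedEmbedding.card_le_congestion [Finite V] (R : RoutedEmbedding G H) {u : V}
    {e : Sym2 W} (S : Finset V) (hS : ∀ v ∈ S, ∃ h : G.Adj u v, e ∈ (R.route u v h).edges) :
    S.card ≤ congestion G H R e := by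
  classical
  calc S.card = (S.image fun v => s(u, v)).card :=
        (Finset.card_image_of_injective _ fun _ _ => Sym2.congr_right.mp).symm
    _ = (↑(S.image fun v => s(u, v)) : Set (Sym2 V)).ncard := (Set.ncard_coe_finset _).symm
    _ ≤ congestion G H R e := Set.ncard_le_ncard ?_ (Set.toFinite _)
  intro d hd
  obtain ⟨v, hv, rfl⟩ := Finset.mem_image.mp hd
  obtain ⟨h, he⟩ := hS v hv
  exact ⟨h, u, v, h, rfl, he⟩

theorem RoutedEmbedding.exists_lt_congestion [Finite V] (R : RoutedEmbedding G H) (u : V)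
    [Fintype (G.neighborSet u)] [Fintype (H.neighborSet (R.toEquiv u))] {k : ℕ}
    (hk : H.degree (R.toEquiv u) * k < G.degree u) :
    ∃ e ∈ H.edgeSet, k < congestion G H R e := by
  classical
  let hop : V → W := fun v => if h : G.Adj u v then (R.route u v h).snd else R.toEquiv u
  have route_not_nil (v : V) (h : G.Adj u v) : ¬ (R.route u v h).Nil :=
    Walk.not_nil_of_ne (R.toEquiv.injective.ne h.ne)
  have hmaps : ∀ v ∈ G.neighborFinset u, hop v ∈ H.neighborFinset (R.toEquiv u) := by
    intro v hv
    rw [mem_neighborFinset] at hv ⊢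
    simpa [hop, hv] using Walk.adj_snd (route_not_nil v hv)
  rw [← card_neighborFinset_eq_degree, ← card_neighborFinset_eq_degree] at hk
  obtain ⟨w, hw, hkw⟩ := Finset.exists_lt_card_fiber_of_mul_lt_card_of_maps_to hmaps hk
  refine ⟨s(R.toEquiv u, w), (mem_neighborFinset _ _ _).mp hw,
    hkw.trans_le (R.card_le_congestion (u := u) _ ?_)⟩
  intro v hv
  obtain ⟨huv, rfl⟩ := Finset.mem_filter.mp hv
  rw [mem_neighborFinset] at huv
  exact ⟨huv, by simpa [hop, huv] using Walk.mk_start_snd_mem_edges (route_not_nil v huv)⟩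

lemma circulantG_degree_le (m : ℕ) [NeZero m] {S : Set ℕ} (hS : S.Finite) (x : ZMod m)
    [Fintype ((circulantG m S).neighborSet x)] : (circulantG m S).degree x ≤ 2 * S.ncard := by
  classical
  have hsub : (circulantG m S).neighborFinset x ⊆
      hS.toFinset.image (fun s : ℕ => x - s) ∪ hS.toFinset.image (fun s : ℕ => x + s) := by
    intro y hy
    obtain ⟨-, h | h⟩ := (mem_neighborFinset _ _ _).mp hy
    · refine Finset.mem_union_left _ (Finset.mem_image.mpr ⟨_, hS.mem_toFinset.mpr h, ?_⟩)
      rw [ZMod.natCast_zmod_val]; ring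
    · refine Finset.mem_union_right _ (Finset.mem_image.mpr ⟨_, hS.mem_toFinset.mpr h, ?_⟩)
      rw [ZMod.natCast_zmod_val]; ring
  calc (circulantG m S).degree x = ((circulantG m S).neighborFinset x).card :=
        (card_neighborFinset_eq_degree _ _).symm
    _ ≤ hS.toFinset.card + hS.toFinset.card :=
        (Finset.card_le_card hsub).trans <| (Finset.card_union_le _ _).trans <|
          add_le_add Finset.card_image_le Finset.card_image_le
    _ = 2 * S.ncard := by rw [Set.ncard_eq_toFinset_card S hS]; ring

lemma windmillGraph_adj_zero {k : ℕ} [NeZero (2 * k)] {v : Fin (2 * k)} :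
    (windmillGraph k).Adj 0 v ↔ v ≠ 0 :=
  ⟨fun h => h.1.symm, fun h => ⟨h.symm, Or.inl rfl⟩⟩

lemma windmillGraph_degree_zero (k : ℕ) [NeZero (2 * k)]
    [Fintype ((windmillGraph k).neighborSet 0)] : (windmillGraph k).degree 0 = 2 * k - 1 := by
  classical
  have hnbr : (windmillGraph k).neighborFinset 0 = Finset.univ.erase 0 := by
    ext v
    simp [windmillGraph_adj_zero]
  rw [← card_neighborFinset_eq_degree, hnbr, Finset.card_erase_of_mem (Finset.mem_univ _),
    Finset.card_univ, Fintype.card_fin]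

theorem congestion_windmill_circulant_lb_general (n : ℕ)
    (R : RoutedEmbedding (windmillGraph (2 ^ (n - 1)))
      (circulantG (2 ^ n) {1, 2 ^ (n - 2)})) :
    ∃ e ∈ (circulantG (2 ^ n) {1, 2 ^ (n - 2)}).edgeSet,
      2 ^ (n - 2) ≤ congestion _ _ R e := by
  classical
  have hhost : (circulantG (2 ^ n) {1, 2 ^ (n - 2)}).degree (R.toEquiv 0) ≤ 4 := by
    refine (circulantG_degree_le _ (Set.toFinite _) _).trans ?_
    have := Set.ncard_insert_le 1 {2 ^ (n - 2)}
    rw [Set.ncard_singleton] at this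
    omega
  have hpow : 2 ^ (n - 2) = 1 ∨ 2 * 2 ^ (n - 2) = 2 ^ (n - 1) := by
    rcases n with _ | _ | n
    · simp
    · simp
    · right; simp [pow_succ, mul_comm]
  obtain ⟨e, he, hlt⟩ := R.exists_lt_congestion 0 (k := 2 ^ (n - 2) - 1) <| by
    rw [windmillGraph_degree_zero]
    have := Nat.one_le_two_pow (n := n - 1)
    calc _ ≤ 4 * (2 ^ (n - 2) - 1) := Nat.mul_le_mul_right _ hhost
      _ < _ := by omega
  exact ⟨e, he, by omega⟩

theorem congestion_windmill_circulant_lb (n : ℕ) (hn : 4 ≤ n)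
    (R : RoutedEmbedding (windmillGraph (2 ^ (n - 1)))
      (circulantG (2 ^ n) {1, 2 ^ (n - 2)})) :
    ∃ e ∈ (circulantG (2 ^ n) {1, 2 ^ (n - 2)}).edgeSet,
      2 ^ (n - 2) ≤ congestion _ _ R e :=
  congestion_windmill_circulant_lb_general n R
end

section
/- Let G be a connected finite simple graph on n ≥ 5 vertices such that for every pair of distinct vertices u and v, the graph G − {u, v} obtained by deleting u and v (and all incident edges) contains a Hamiltonian cycle. Then G contains a Hamiltonian path, i.e., a path of length n − 1 visiting all n vertices. -/
/-! Take an edge `uv` and a Hamiltonian cycle `C` of `G - {u, v}`. Deleting `v` and a vertex `w`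
of `C` instead shows that `u` has a neighbour `z ∉ {u, v}`, i.e. on `C`. Then `v, u, z` followed
by `C` traversed from `z` is a Hamiltonian path. -/

open SimpleGraph

namespace SimpleGraph.Walk

variable {V : Type*} [DecidableEq V] {G : SimpleGraph V}

lemma IsHamiltonian.reverse {a b : V} {p : G.Walk a b} (hp : p.IsHamiltonian) :
    p.reverse.IsHamiltonian := fun x => by
  rw [support_reverse, List.count_reverse]
  exact hp x

lemma IsHamiltonianCycle.exists_adj {a : V} {c : G.Walk a a} (hc : c.IsHamiltonianCycle)
    (x : V) : ∃ y, G.Adj x y :=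
  ⟨_, adj_snd (hc.rotate (hc.mem_support x)).isCycle.not_nil⟩

variable {s : Set V} {a b : s}

lemma IsHamiltonian.count_support_map_induce_of_mem {p : (G.induce s).Walk a b}
    (hp : p.IsHamiltonian) {x : V} (hx : x ∈ s) :
    (p.map (Embedding.induce s).toHom).support.count x = 1 := by
  rw [support_map, ← hp ⟨x, hx⟩]
  exact @List.count_map_of_injective s V instBEqOfDecidableEq _ _ _ _ _
    (Embedding.induce (G := G) s).injective ⟨x, hx⟩

lemma count_support_map_induce_of_notMem (p : (G.induce s).Walk a b) {x : V} (hx : x ∉ s) :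
    (p.map (Embedding.induce s).toHom).support.count x = 0 := by
  rw [support_map, List.count_eq_zero]
  rintro h
  obtain ⟨y, -, rfl⟩ := List.mem_map.mp h
  exact hx y.2

end SimpleGraph.Walk

open Walk

section

variable {V : Type*} [DecidableEq V] {G : SimpleGraph V}

lemma exists_adj_mem_of_isHamiltonianCycle_induce {s : Set V} {a : s} {c : (G.induce s).Walk a a}
    (hc : c.IsHamiltonianCycle) {x : V} (hx : x ∈ s) : ∃ y ∈ s, G.Adj x y := by
  obtain ⟨y, hy⟩ := hc.exists_adj ⟨x, hx⟩
  exact ⟨y, y.2, hy⟩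

lemma isHamiltonian_cons_cons_map_induce {u v z : V} (hvu : G.Adj v u) (huz : G.Adj u z)
    {hz : z ∈ ({u, v}ᶜ : Set V)} {b : ({u, v}ᶜ : Set V)}
    {p : (G.induce {u, v}ᶜ).Walk ⟨z, hz⟩ b} (hp : p.IsHamiltonian) :
    (cons hvu (cons huz (p.map (Embedding.induce _).toHom))).IsHamiltonian := fun x => by
  have hsupport : (cons hvu (cons huz (p.map (Embedding.induce _).toHom))).support =
      v :: u :: (p.map (Embedding.induce _).toHom).support := rfl
  rw [hsupport, List.count_cons, List.count_cons]
  by_cases hx : x ∈ ({u, v}ᶜ : Set V)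
  · obtain ⟨hxu, hxv⟩ : x ≠ u ∧ x ≠ v := by simpa [not_or] using hx
    rw [hp.count_support_map_induce_of_mem hx]
    simp [hxu.symm, hxv.symm]
  · rw [count_support_map_induce_of_notMem p hx]
    obtain rfl | rfl : x = u ∨ x = v := by
      simpa only [Set.mem_compl_iff, not_not, Set.mem_insert_iff, Set.mem_singleton_iff] using hx
    · simp [hvu.ne]
    · simp [hvu.ne']

end

theorem hamiltonian_path_of_two_fault_hamiltonian_general
    {V : Type*} [DecidableEq V] (G : SimpleGraph V) (hconn : G.Connected)
    (hfault : ∀ u v : V, u ≠ v →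
      ∃ (a : ({u, v}ᶜ : Set V)) (c : (G.induce ({u, v}ᶜ : Set V)).Walk a a),
        c.IsHamiltonianCycle) :
    ∃ (a b : V) (p : G.Walk a b), p.IsHamiltonian := by
  cases subsingleton_or_nontrivial V with
  | inl _ =>
    obtain ⟨x⟩ := hconn.nonempty
    exact ⟨x, x, .nil, .of_subsingleton⟩
  | inr _ =>
    obtain ⟨u, v, huv⟩ : ∃ u v, G.Adj u v :=
      ne_bot_iff_exists_adj.mp fun h => not_connected_bot (h ▸ hconn)
    obtain ⟨⟨w, hw⟩, c, hc⟩ := hfault u v huv.ne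
    obtain ⟨hwu, hwv⟩ : w ≠ u ∧ w ≠ v := by simpa [not_or] using hw
    obtain ⟨_, c', hc'⟩ := hfault v w hwv.symm
    obtain ⟨z, hz, huz⟩ := exists_adj_mem_of_isHamiltonianCycle_induce hc'
      (x := u) (by simp [huv.ne, hwu.symm])
    have hz' : z ∈ ({u, v}ᶜ : Set V) := by
      simp only [Set.mem_compl_iff, Set.mem_insert_iff, Set.mem_singleton_iff, not_or] at hz ⊢
      exact ⟨huz.ne', hz.1⟩
    exact ⟨v, _, _, isHamiltonian_cons_cons_map_induce huv.symm huz
      (hc.rotate (hc.mem_support ⟨z, hz'⟩)).isHamiltonian_tail.reverse⟩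

theorem hamiltonian_path_of_two_fault_hamiltonian
    {V : Type*} [Fintype V] [DecidableEq V] (G : SimpleGraph V) (n : ℕ)
    (hcard : Fintype.card V = n) (hn : 5 ≤ n) (hconn : G.Connected)
    (hfault : ∀ u v : V, u ≠ v →
      ∃ (a : ({u, v}ᶜ : Set V)) (c : (G.induce ({u, v}ᶜ : Set V)).Walk a a),
        c.IsHamiltonianCycle) :
    ∃ (a b : V) (p : G.Walk a b), p.IsHamiltonian :=
  hamiltonian_path_of_two_fault_hamiltonian_general G hconn hfault
end

section
/- Let H be a connected finite simple graph on n ≥ 4 vertices and let u be a median of H, i.e., a vertex minimizing δ(u) = Σ_{v ∈ V(H)} dist_H(u, v). Then WL(W_n, H) ≥ (n − 1) + δ(u): every bijection f from the vertices of the wheel W_n to the vertices of H has wirelength at least (n − 1) + δ(u). -/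
open SimpleGraph

open scoped Classical in
/-- The wirelength of a vertex mapping `f`: the sum over edges of `G` of the distance
in `H` between the images of the endpoints. -/
noncomputable def wirelength {α β : Type*} [Fintype α] (G : SimpleGraph α) (H : SimpleGraph β)
    (f : α → β) : ℕ :=
  ∑ e ∈ G.edgeSet.toFinset,
    Sym2.lift ⟨fun a b => H.dist (f a) (f b), fun _ _ => SimpleGraph.dist_comm⟩ e

/-!
The wheel contains the edge-disjoint union of the star at its hub and the rim cycle, and
wirelength is monotone in the guest graph and additive over edge-disjoint unions. The star
contributes `δ (f hub) ≥ δ u`, and each of the `n - 1` rim edges is sent to two distinct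
vertices of the connected graph `H`, hence costs at least `1`.
-/

open Finset

section Wirelength

variable {α β : Type*} (H : SimpleGraph β) (f : α → β)

noncomputable def edgeDist : Sym2 α → ℕ :=
  Sym2.lift ⟨fun a b => H.dist (f a) (f b), fun _ _ => SimpleGraph.dist_comm⟩

@[simp]
lemma edgeDist_mk (a b : α) : edgeDist H f s(a, b) = H.dist (f a) (f b) := rfl

variable [Fintype α]

lemma wirelength_eq_sum_edgeFinset (G : SimpleGraph α) [Fintype G.edgeSet] :
    wirelength G H f = ∑ e ∈ G.edgeFinset, edgeDist H f e := by
  unfold wirelength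
  exact sum_congr (by ext; simp) fun _ _ => rfl

lemma wirelength_mono {G G' : SimpleGraph α} (h : G ≤ G') :
    wirelength G H f ≤ wirelength G' H f := by
  classical
  simp only [wirelength_eq_sum_edgeFinset]
  exact sum_le_sum_of_subset (edgeFinset_mono h)

lemma wirelength_sup {G₁ G₂ : SimpleGraph α} (h : Disjoint G₁ G₂) :
    wirelength (G₁ ⊔ G₂) H f = wirelength G₁ H f + wirelength G₂ H f := by
  classical
  simp only [wirelength_eq_sum_edgeFinset, edgeFinset_sup]
  exact sum_union (disjoint_edgeFinset.mpr h)

lemma card_edgeFinset_le_wirelength (G : SimpleGraph α) [Fintype G.edgeSet]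
    (hH : H.Connected) (hf : f.Injective) : #G.edgeFinset ≤ wirelength G H f := by
  rw [wirelength_eq_sum_edgeFinset, card_eq_sum_ones]
  refine sum_le_sum fun e he => ?_
  induction e using Sym2.ind with
  | h a b => exact hH.pos_dist_of_ne (hf.ne (G.ne_of_adj (by simpa using he)))

lemma wirelength_starGraph [DecidableEq α] (c : α) :
    wirelength (starGraph c) H f = ∑ v, H.dist (f c) (f v) := by
  have hedges : (starGraph c).edgeFinset = (univ.erase c).image (fun v => s(c, v)) := by
    ext e
    induction e using Sym2.ind with
    | h a b => aesop
  rw [wirelength_eq_sum_edgeFinset, hedges, sum_image fun _ _ _ _ h => Sym2.congr_right.mp h]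
  simp [sum_erase]

end Wirelength

lemma SimpleGraph.card_edgeFinset_cycleGraph (m : ℕ) :
    #(cycleGraph (m + 3)).edgeFinset = m + 3 := by
  have := (cycleGraph (m + 3)).sum_degrees_eq_twice_card_edges
  simp only [cycleGraph_degree_three_le, sum_const, card_univ, Fintype.card_fin, smul_eq_mul] at this
  omega

lemma disjoint_starGraph_map_succEmb {m : ℕ} (G : SimpleGraph (Fin m)) :
    Disjoint (starGraph 0) (G.map (Fin.succEmb m)) := by
  rw [SimpleGraph.disjoint_left]
  rintro x y ⟨-, hxy⟩ ⟨-, a, b, -, rfl, rfl⟩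
  simp_all [Fin.succ_ne_zero]

lemma Fin.val_eq_succ_or_wrap_of_val_sub_eq_one {m : ℕ} {a b : Fin m} (h : (a - b).val = 1) :
    a.val = b.val + 1 ∨ (a.val = 0 ∧ b.val = m - 1) := by
  rcases le_or_gt b a with hle | hlt
  · rw [Fin.coe_sub_iff_le.mpr hle] at h; omega
  · rw [Fin.coe_sub_iff_lt.mpr hlt] at h; omega

lemma starGraph_sup_map_cycleGraph_le_wheelGraph (m : ℕ) :
    starGraph 0 ⊔ (cycleGraph m).map (Fin.succEmb m) ≤ wheelGraph (m + 1) := by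
  rintro x y (⟨hne, hx | hy⟩ | ⟨-, a, b, hab, rfl, rfl⟩)
  · exact ⟨hne, Or.inl (by simp [hx])⟩
  · exact ⟨hne, Or.inr (Or.inl (by simp [hy]))⟩
  · refine ⟨(Fin.succEmb m).injective.ne hab.ne, ?_⟩
    simp only [Fin.coe_succEmb, Fin.val_succ]
    rcases cycleGraph_adj'.mp hab with h | h
    · rcases Fin.val_eq_succ_or_wrap_of_val_sub_eq_one h with h | h <;> omega
    · rcases Fin.val_eq_succ_or_wrap_of_val_sub_eq_one h with h | h <;> omega

theorem wirelength_wheel_lower_bound_general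
    {V : Type*} [Fintype V] (H : SimpleGraph V) (n : ℕ)
    (hn : 4 ≤ n) (hconn : H.Connected)
    (u : V) (hmed : ∀ v : V, (∑ w : V, H.dist u w) ≤ ∑ w : V, H.dist v w)
    (f : Fin n ≃ V) :
    (n - 1) + ∑ w : V, H.dist u w ≤ wirelength (wheelGraph n) H f := by
  obtain ⟨m, rfl⟩ : ∃ m, n = m + 3 + 1 := ⟨n - 4, by omega⟩
  have hrim : m + 3 ≤ wirelength ((cycleGraph (m + 3)).map (Fin.succEmb _)) H f :=
    calc m + 3 = #(cycleGraph (m + 3)).edgeFinset := (card_edgeFinset_cycleGraph m).symm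
      _ = #((cycleGraph (m + 3)).map (Fin.succEmb _)).edgeFinset := by
          -- the two sides differ only in their `DecidableRel` instances
          convert (card_edgeFinset_map (Fin.succEmb _) _).symm
      _ ≤ _ := card_edgeFinset_le_wirelength H f _ hconn f.injective
  have hstar : ∑ w, H.dist u w ≤ wirelength (starGraph 0) H f := by
    rw [wirelength_starGraph, f.sum_comp (H.dist (f 0))]
    exact hmed (f 0)
  calc m + 3 + 1 - 1 + ∑ w, H.dist u w
      ≤ wirelength (starGraph 0) H f
          + wirelength ((cycleGraph (m + 3)).map (Fin.succEmb _)) H f := by omega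
    _ = wirelength (starGraph 0 ⊔ (cycleGraph (m + 3)).map (Fin.succEmb _)) H f :=
        (wirelength_sup H f (disjoint_starGraph_map_succEmb _)).symm
    _ ≤ wirelength (wheelGraph (m + 3 + 1)) H f :=
        wirelength_mono H f (starGraph_sup_map_cycleGraph_le_wheelGraph _)

theorem wirelength_wheel_lower_bound
    {V : Type*} [Fintype V] [DecidableEq V] (H : SimpleGraph V) (n : ℕ)
    (hcard : Fintype.card V = n) (hn : 4 ≤ n) (hconn : H.Connected)
    (u : V) (hmed : ∀ v : V, (∑ w : V, H.dist u w) ≤ ∑ w : V, H.dist v w)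
    (f : Fin n ≃ V) :
    (n - 1) + ∑ w : V, H.dist u w ≤ wirelength (wheelGraph n) H f :=
  wirelength_wheel_lower_bound_general H n hn hconn u hmed f
end

section
/- Let H be a connected finite simple graph on n ≥ 4 vertices and let u be a median of H, i.e., a vertex minimizing δ(u) = Σ_{v ∈ V(H)} dist_H(u, v). If H − u contains a Hamiltonian cycle, then WL(W_n, H) = (n − 1) + δ(u); in particular there exists a bijection f from the vertices of the wheel W_n to the vertices of H with wirelength exactly (n − 1) + δ(u). -/
open SimpleGraph

/-!
Write `n = m + 1`. The wheel on `Fin (m + 1)` is the star centred at the hub `0` together with a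
copy of the cycle `C_m` on the rim, so the wirelength of `f` splits as `δ(f 0)` plus the wirelength
of `C_m` under `f ∘ Fin.succ`. The first term is at least `δ(u)` because `u` is a median, and each
of the `m` rim edges costs at least `1` because `f` is injective and `H` is connected. Both bounds
are attained by sending the hub to `u` and running the rim along a Hamiltonian cycle of `H - u`.
-/

namespace SimpleGraph

open Finset

variable {α β : Type*} [Fintype α]

theorem wirelength_eq_sum_edgeFinset (G : SimpleGraph α) [DecidableRel G.Adj]
    (H : SimpleGraph β) (f : α → β) :
    wirelength G H f = ∑ e ∈ G.edgeFinset,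
      Sym2.lift ⟨fun a b => H.dist (f a) (f b), fun _ _ => dist_comm⟩ e := by
  unfold wirelength
  congr 1
  ext; simp

theorem wirelength_sup {G₁ G₂ : SimpleGraph α} (h : Disjoint G₁ G₂)
    (H : SimpleGraph β) (f : α → β) :
    wirelength (G₁ ⊔ G₂) H f = wirelength G₁ H f + wirelength G₂ H f := by
  classical
  simp only [wirelength_eq_sum_edgeFinset, edgeFinset_sup]
  exact Finset.sum_union (disjoint_edgeFinset.2 h)

theorem wirelength_map {γ : Type*} [Fintype γ] (e : γ ↪ α) (G : SimpleGraph γ)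
    (H : SimpleGraph β) (f : α → β) :
    wirelength (G.map e) H f = wirelength G H (f ∘ e) := by
  classical
  rw [wirelength_eq_sum_edgeFinset, wirelength_eq_sum_edgeFinset, edgeFinset_map,
    Finset.sum_map]
  congr 1
  ext x
  induction x using Sym2.ind
  simp

theorem wirelength_starGraph (r : α) (H : SimpleGraph β) (f : α → β) :
    wirelength (starGraph r) H f = ∑ v, H.dist (f r) (f v) := by
  classical
  have hedges : (starGraph r).edgeFinset = (Finset.univ.erase r).image (fun v => s(r, v)) := by
    ext e
    induction e using Sym2.ind with
    | _ a b =>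
      simp only [mem_edgeFinset, mem_edgeSet, starGraph_adj, mem_image, mem_erase, mem_univ,
        and_true, Sym2.eq_iff]
      aesop
  rw [wirelength_eq_sum_edgeFinset, hedges, Finset.sum_image,
    ← Finset.add_sum_erase _ _ (Finset.mem_univ r)]
  · simp
  · intro a _ b _ hab
    simp only [Sym2.eq_iff, true_and] at hab
    grind

theorem wirelength_eq_card_edgeFinset (G : SimpleGraph α) [DecidableRel G.Adj]
    {H : SimpleGraph β} (φ : G →g H) : wirelength G H φ = #G.edgeFinset := by
  rw [wirelength_eq_sum_edgeFinset, Finset.card_eq_sum_ones]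
  refine Finset.sum_congr rfl fun e he => ?_
  induction e using Sym2.ind with
  | _ a b => simpa [dist_eq_one_iff_adj] using φ.map_adj (mem_edgeFinset.1 he)

theorem card_edgeFinset_le_wirelength (G : SimpleGraph α) [DecidableRel G.Adj]
    {H : SimpleGraph β} (hH : H.Connected) {f : α → β} (hf : Function.Injective f) :
    #G.edgeFinset ≤ wirelength G H f := by
  rw [wirelength_eq_sum_edgeFinset, Finset.card_eq_sum_ones]
  refine Finset.sum_le_sum fun e he => ?_
  induction e using Sym2.ind with
  | _ a b => exact hH.pos_dist_of_ne (hf.ne (G.ne_of_adj (mem_edgeFinset.1 he)))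

theorem cycleGraph_adj_iff_val {m : ℕ} {i j : Fin m} :
    (cycleGraph m).Adj i j ↔ i ≠ j ∧ (j.val = i.val + 1 ∨ i.val = j.val + 1 ∨
      (i.val = 0 ∧ j.val = m - 1) ∨ (j.val = 0 ∧ i.val = m - 1)) := by
  have hsub : ∀ a b : Fin m,
      (a - b).val = 1 ↔ a.val = b.val + 1 ∨ (a.val = 0 ∧ b.val = m - 1 ∧ m ≠ 1) := by
    intro a b
    rcases le_or_gt b a with h | h
    · rw [Fin.sub_val_of_le h]; omega
    · rw [Fin.coe_sub_iff_lt.2 h]; omega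
  rw [cycleGraph_adj', hsub, hsub, ← Fin.val_ne_iff]
  omega

theorem card_edgeFinset_cycleGraph_s15 {m : ℕ} (hm : 3 ≤ m) : #(cycleGraph m).edgeFinset = m := by
  obtain ⟨k, rfl⟩ : ∃ k, m = k + 3 := ⟨m - 3, by omega⟩
  have hdeg := (cycleGraph (k + 3)).sum_degrees_eq_twice_card_edges
  simp only [cycleGraph_degree_three_le, sum_const, card_univ, Fintype.card_fin,
    smul_eq_mul] at hdeg
  omega

theorem wheelGraph_eq_starGraph_sup_map_cycleGraph (m : ℕ) :
    wheelGraph (m + 1) = starGraph 0 ⊔ (cycleGraph m).map (Fin.succEmb m) := by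
  ext x y
  cases x using Fin.cases <;> cases y using Fin.cases <;>
    simp only [wheelGraph, sup_adj, starGraph_adj, map_adj] <;>
    simp [cycleGraph_adj_iff_val, Fin.succ_ne_zero]
  omega

theorem disjoint_starGraph_map_cycleGraph (m : ℕ) :
    Disjoint (starGraph 0) ((cycleGraph m).map (Fin.succEmb m)) := by
  rw [disjoint_left]
  rintro x y ⟨-, hxy⟩ ⟨-, i, j, -, rfl, rfl⟩
  simp [Fin.succ_ne_zero] at hxy

theorem wirelength_wheelGraph {V : Type*} (m : ℕ) (H : SimpleGraph V) (f : Fin (m + 1) → V) :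
    wirelength (wheelGraph (m + 1)) H f =
      ∑ i, H.dist (f 0) (f i) + wirelength (cycleGraph m) H (f ∘ Fin.succ) := by
  rw [wheelGraph_eq_starGraph_sup_map_cycleGraph,
    wirelength_sup (disjoint_starGraph_map_cycleGraph m), wirelength_starGraph, wirelength_map,
    Fin.coe_succEmb]

theorem Walk.IsHamiltonianCycle.exists_bijective_hom_cycleGraph {W : Type*} [Fintype W]
    [DecidableEq W] {K : SimpleGraph W} {a : W} {c : K.Walk a a} (hc : c.IsHamiltonianCycle)
    {k : ℕ} (hk : Fintype.card W = k) : ∃ φ : cycleGraph k →g K, Function.Bijective φ := by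
  subst hk
  obtain ⟨φ⟩ := (cycleGraph_isContained_iff (hc.length_eq ▸ hc.isCycle.three_le_length)).2
    ⟨a, c, hc.isCycle, hc.length_eq⟩
  exact ⟨φ.toHom, (Fintype.bijective_iff_injective_and_card _).2 ⟨φ.injective, by simp⟩⟩

end SimpleGraph

theorem wirelength_wheel_eq_of_hamiltonian
    {V : Type*} [Fintype V] [DecidableEq V] (H : SimpleGraph V) (n : ℕ)
    (hcard : Fintype.card V = n) (hn : 4 ≤ n) (hconn : H.Connected)
    (u : V) (hmed : ∀ v : V, (∑ w : V, H.dist u w) ≤ ∑ w : V, H.dist v w)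
    (hham : ∃ (a : ({u}ᶜ : Set V)) (c : (H.induce ({u}ᶜ : Set V)).Walk a a),
      c.IsHamiltonianCycle) :
    (∀ f : Fin n ≃ V, (n - 1) + ∑ w : V, H.dist u w ≤ wirelength (wheelGraph n) H f) ∧
    (∃ f : Fin n ≃ V, wirelength (wheelGraph n) H f = (n - 1) + ∑ w : V, H.dist u w) := by
  obtain ⟨m, rfl⟩ : ∃ m, n = m + 1 := ⟨n - 1, by omega⟩
  have hm : 3 ≤ m := by omega
  rw [Nat.add_sub_cancel]
  refine ⟨fun f => ?_, ?_⟩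
  · have hrim := card_edgeFinset_cycleGraph_s15 hm ▸
      card_edgeFinset_le_wirelength (cycleGraph m) hconn (f.injective.comp (Fin.succ_injective m))
    rw [wirelength_wheelGraph, Equiv.sum_comp f (H.dist (f 0))]
    have hhub := hmed (f 0)
    omega
  · obtain ⟨a, c, hc⟩ := hham
    obtain ⟨φ, hφ⟩ := hc.exists_bijective_hom_cycleGraph (k := m)
      (by rw [Fintype.card_compl_set, hcard]; simp)
    let e : Fin m ≃ {v // v ≠ u} := (Equiv.ofBijective φ hφ).trans
      (Equiv.subtypeEquivRight fun _ => Set.mem_compl_singleton_iff)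
    let f : Fin (m + 1) ≃ V :=
      (finSuccEquiv m).trans ((Equiv.optionCongr e).trans (Equiv.optionSubtypeNe u))
    have hrim : f ∘ Fin.succ = (Embedding.induce _).toHom.comp φ := by
      ext i; simp [f, e]
    refine ⟨f, ?_⟩
    rw [wirelength_wheelGraph, hrim, wirelength_eq_card_edgeFinset,
      card_edgeFinset_cycleGraph_s15 hm, Equiv.sum_comp f (H.dist (f 0))]
    simp [f, add_comm]
end
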